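/- arXiv:1206.2522 — 2 statements merged into one kernel-verified Lean document; each statement's English description precedes it below -/
import Mathlib

section
/- The generalized translation of a monomial is τ_y x^n = Σ_{k=0}^{n} ([n]_μ!/([k]_μ! [n−k]_μ!)) x^k y^{n−k}. -/
/-- The Dunkl operator `D_μ f(x) = f'(x) + μ (f(x) - f(-x))/x`. -/
noncomputable def dunkl (μ : ℝ) (f : ℝ → ℝ) (x : ℝ) : ℝ :=
  deriv f x + μ * (f x - f (-x)) / x

/-- The deformed integer `[n]_μ = n + μ (1 - (-1)^n)`. -/
noncomputable def dIdx (μ : ℝ) (n : ℕ) : ℝ := n + μ * (1 - (-1 : ℝ) ^ n)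

/-- The deformed factorial `[n]_μ!`. -/
noncomputable def dFact (μ : ℝ) : ℕ → ℝ
  | 0 => 1
  | n + 1 => dIdx μ (n + 1) * dFact μ n

/-- The generalized translation `τ_y f = Σ_{k≥0} (y^k/[k]_μ!) D_μ^k f`. -/
noncomputable def tau (μ : ℝ) (y : ℝ) (f : ℝ → ℝ) (x : ℝ) : ℝ :=
  ∑' k : ℕ, (y ^ k / dFact μ k) * ((dunkl μ)^[k] f x)

/-! Since `D_μ t^m = [m]_μ t^(m-1)` away from `0` and `[0]_μ = 0`, the iterate `D_μ^k t^n` is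
`[n]_μ [n-1]_μ ⋯ [n-k+1]_μ t^(n-k) = ([n]_μ!/[n-k]_μ!) t^(n-k)`, and it vanishes for `k > n`.
So the series defining `τ_y x^n` is a finite sum with the deformed binomial coefficients;
for `μ ≥ 0` all `[m]_μ!` are positive, so the divisions are genuine. -/

noncomputable def dDescFact (μ : ℝ) (n : ℕ) : ℕ → ℝ
  | 0 => 1
  | k + 1 => dIdx μ (n - k) * dDescFact μ n k

lemma dIdx_zero (μ : ℝ) : dIdx μ 0 = 0 := by
  simp [dIdx]

lemma dIdx_pos {μ : ℝ} (hμ : 0 ≤ μ) {m : ℕ} (hm : 0 < m) : 0 < dIdx μ m := by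
  have hm' : (1 : ℝ) ≤ m := by exact_mod_cast hm
  rcases Nat.even_or_odd m with h | h <;> simp [dIdx, h.neg_one_pow] <;> linarith

lemma dFact_pos {μ : ℝ} (hμ : 0 ≤ μ) (n : ℕ) : 0 < dFact μ n := by
  induction n with
  | zero => simp [dFact]
  | succ k ih => exact mul_pos (dIdx_pos hμ k.succ_pos) ih

lemma dDescFact_mul_dFact_sub (μ : ℝ) {n k : ℕ} (h : k ≤ n) :
    dDescFact μ n k * dFact μ (n - k) = dFact μ n := by
  induction k with
  | zero => simp [dDescFact]
  | succ k ih =>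
    have hnk : n - k = n - (k + 1) + 1 := by omega
    rw [dDescFact, ← ih (by omega), hnk, dFact, ← hnk]
    ring

lemma dDescFact_eq_div {μ : ℝ} (hμ : 0 ≤ μ) {n k : ℕ} (h : k ≤ n) :
    dDescFact μ n k = dFact μ n / dFact μ (n - k) := by
  rw [eq_div_iff (dFact_pos hμ _).ne', dDescFact_mul_dFact_sub μ h]

lemma dDescFact_eq_zero_of_lt (μ : ℝ) {n k : ℕ} (h : n < k) : dDescFact μ n k = 0 := by
  induction k with
  | zero => omega
  | succ k ih =>
    rcases Nat.lt_or_ge n k with h' | h'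
    · rw [dDescFact, ih h', mul_zero]
    · rw [dDescFact, show n - k = 0 by omega, dIdx_zero, zero_mul]

lemma dunkl_congr (μ : ℝ) {f g : ℝ → ℝ} (h : Set.EqOn f g {0}ᶜ) {x : ℝ} (hx : x ≠ 0) :
    dunkl μ f x = dunkl μ g x := by
  have hd : deriv f x = deriv g x :=
    Filter.EventuallyEq.deriv_eq (Filter.eventually_of_mem (isOpen_compl_singleton.mem_nhds hx) h)
  rw [dunkl, dunkl, hd, h hx, h (neg_ne_zero.mpr hx : -x ∈ ({0}ᶜ : Set ℝ))]

lemma dunkl_const_mul_pow (μ c : ℝ) (m : ℕ) {x : ℝ} (hx : x ≠ 0) :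
    dunkl μ (fun t => c * t ^ m) x = c * dIdx μ m * x ^ (m - 1) := by
  have hderiv : deriv (fun t : ℝ => c * t ^ m) x = c * (m * x ^ (m - 1)) := by
    simp
  rw [dunkl, hderiv]
  cases m with
  | zero => simp [dIdx]
  | succ m =>
    rw [neg_pow, dIdx, Nat.add_sub_cancel, pow_succ]
    field_simp

lemma iterate_dunkl_pow (μ : ℝ) (n k : ℕ) {x : ℝ} (hx : x ≠ 0) :
    (dunkl μ)^[k] (fun t => t ^ n) x = dDescFact μ n k * x ^ (n - k) := by
  induction k generalizing x with
  | zero => simp [dDescFact]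
  | succ k ih =>
    rw [Function.iterate_succ_apply', dunkl_congr μ (fun t ht => ih ht) hx,
      dunkl_const_mul_pow μ _ _ hx, dDescFact, show n - (k + 1) = n - k - 1 by omega]
    ring

/-- `τ_y x^n = Σ_{k=0}^n ([n]_μ!/([k]_μ! [n-k]_μ!)) x^k y^(n-k)`. -/
theorem tau_monomial (μ : ℝ) (hμ : 0 ≤ μ) (n : ℕ) (x y : ℝ) (hx : x ≠ 0) :
    tau μ y (fun t => t ^ n) x =
      ∑ k ∈ Finset.range (n + 1),
        (dFact μ n / (dFact μ k * dFact μ (n - k))) * x ^ k * y ^ (n - k) := by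
  have hseries : tau μ y (fun t => t ^ n) x
      = ∑ k ∈ Finset.range (n + 1), y ^ k / dFact μ k * (dDescFact μ n k * x ^ (n - k)) := by
    simp_rw [tau, iterate_dunkl_pow μ n _ hx]
    refine tsum_eq_sum fun k hk => ?_
    rw [dDescFact_eq_zero_of_lt μ (by simpa using hk), zero_mul, mul_zero]
  rw [hseries, ← Finset.sum_range_reflect]
  refine Finset.sum_congr rfl fun k hk => ?_
  have hkn : k ≤ n := Nat.lt_succ_iff.mp (Finset.mem_range.mp hk)
  rw [show n + 1 - 1 - k = n - k by omega, dDescFact_eq_div hμ (Nat.sub_le n k), Nat.sub_sub_self hkn]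
  have := (dFact_pos hμ k).ne'
  have := (dFact_pos hμ (n - k)).ne'
  field_simp
end

section
/- The deformed Bessel functions satisfy Σ_{n=−∞}^{∞} J_n^μ(x) = 1, equivalently J_0^μ(x) + 2 Σ_{n≥1} J_{2n}^μ(x) = 1, for all real x. -/
/-- The deformed Bessel function `J_n^μ` for `n ≥ 0`. -/
noncomputable def Jmu (μ : ℝ) (n : ℕ) (x : ℝ) : ℝ :=
  ∑' k : ℕ, (-1 : ℝ) ^ k * (Nat.factorial (2 * k + n)) /
      ((Nat.factorial k) * (Nat.factorial (k + n)) * dFact μ (2 * k + n)) *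
    (x / 2) ^ (2 * k + n)

/-- `J_n^μ` for `n ∈ ℤ`, with `J_{-n}^μ = (-1)^n J_n^μ`. -/
noncomputable def JmuZ (μ : ℝ) (n : ℤ) (x : ℝ) : ℝ :=
  if 0 ≤ n then Jmu μ n.toNat x else (-1 : ℝ) ^ (-n).toNat * Jmu μ (-n).toNat x

/-!
Write `c_N = (x/2)^N / [N]_μ!`. The `k`-th term of `J_n^μ` is `(-1)^k C(2k+n, k) c_{2k+n}` and
that of `J_{-n}^μ` is `(-1)^(n+k) C(2k+n, k) c_{2k+n}`. The substitution `(j, l) = (k, k+n)`,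
resp. `(k+n, k)`, indexes the terms of all the `J_n^μ`, `n ∈ ℤ`, bijectively by `ℕ × ℕ`, the term
at `(j, l)` being `(-1)^j C(j+l, j) c_{j+l}`. Summing along the antidiagonals `j + l = N` gives
`c_N (1 - 1)^N`, so the total is `c_0 = 1`; the double series converges absolutely because
`[N]_μ! ≥ N!` for `μ ≥ 0`. Pairing `n` with `-n` turns this into the second identity, since
`J_n^μ + J_{-n}^μ` vanishes for odd `n`.
-/

open Nat Finset

theorem HasSum.sum_antidiagonal {M A : Type*} [AddCommMonoid M] [TopologicalSpace M]
    [ContinuousAdd M] [RegularSpace M] [AddMonoid A] [HasAntidiagonal A] {f : A × A → M} {a : M}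
    (hf : HasSum f a) : HasSum (fun n => ∑ p ∈ antidiagonal n, f p) a :=
  (HasAntidiagonal.sigmaAntidiagonalEquivProd.hasSum_iff.2 hf).sigma fun n =>
    (antidiagonal n).hasSum f

theorem Finset.sum_antidiagonal_neg_one_pow_mul_choose {R : Type*} [Ring R] (n : ℕ) :
    ∑ p ∈ antidiagonal n, (-1 : R) ^ p.1 * n.choose p.1 = if n = 0 then 1 else 0 := by
  calc ∑ p ∈ antidiagonal n, (-1 : R) ^ p.1 * n.choose p.1
      = ∑ p ∈ antidiagonal n, n.choose p.1 • ((-1 : R) ^ p.1 * 1 ^ p.2) := by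
        simp only [one_pow, mul_one, nsmul_eq_mul, (Nat.cast_commute _ _).eq]
    _ = (-1 + 1) ^ n := ((Commute.one_right _).add_pow' n).symm
    _ = if n = 0 then 1 else 0 := by rw [neg_add_cancel, zero_pow_eq, ← ite_not]

def subMinEquiv : ℕ × ℕ ≃ ℤ × ℕ where
  toFun p := ((p.2 : ℤ) - p.1, min p.1 p.2)
  invFun q := (q.2 + (-q.1).toNat, q.2 + q.1.toNat)
  left_inv p := by ext <;> dsimp <;> omega
  right_inv q := by ext <;> dsimp <;> omega

section

variable (μ x : ℝ)

lemma natCast_le_dIdx (hμ : 0 ≤ μ) (n : ℕ) : (n : ℝ) ≤ dIdx μ n := by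
  have : 0 ≤ 1 - (-1 : ℝ) ^ n := by
    rcases n.even_or_odd with h | h <;> simp [h.neg_one_pow]
  unfold dIdx
  nlinarith

lemma factorial_le_dFact (hμ : 0 ≤ μ) : ∀ n, (n ! : ℝ) ≤ dFact μ n
  | 0 => by simp [dFact]
  | n + 1 => by
    rw [factorial_succ, cast_mul, dFact]
    exact mul_le_mul (by exact_mod_cast natCast_le_dIdx μ hμ (n + 1))
      (factorial_le_dFact hμ n) (by positivity)
      ((Nat.cast_nonneg _).trans (natCast_le_dIdx μ hμ (n + 1)))

noncomputable def dPowDivFact (N : ℕ) : ℝ := (x / 2) ^ N / dFact μ N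

lemma abs_dPowDivFact_le (hμ : 0 ≤ μ) (N : ℕ) :
    |dPowDivFact μ x N| ≤ |x / 2| ^ N / N ! := by
  have hpos : (0 : ℝ) < dFact μ N := (by positivity : (0 : ℝ) < N !).trans_le
    (factorial_le_dFact μ hμ N)
  rw [dPowDivFact, abs_div, abs_pow, abs_of_pos hpos]
  exact div_le_div_of_nonneg_left (by positivity) (by positivity) (factorial_le_dFact μ hμ N)

noncomputable def JmuTerm (n k : ℕ) : ℝ :=
  (-1) ^ k * (2 * k + n).choose k * dPowDivFact μ x (2 * k + n)

lemma Jmu_eq_tsum (n : ℕ) : Jmu μ n x = ∑' k, JmuTerm μ x n k := by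
  refine tsum_congr fun k => ?_
  have hchoose : ((2 * k + n).choose k : ℝ) = (2 * k + n) ! / (k ! * (k + n) !) := by
    rw [show 2 * k + n = k + (k + n) by ring, cast_add_choose]
  rw [JmuTerm, hchoose, dPowDivFact]
  ring

noncomputable def JmuZTerm (p : ℤ × ℕ) : ℝ :=
  if 0 ≤ p.1 then JmuTerm μ x p.1.toNat p.2
  else (-1) ^ (-p.1).toNat * JmuTerm μ x (-p.1).toNat p.2

lemma JmuZ_eq_tsum (n : ℤ) : JmuZ μ n x = ∑' k, JmuZTerm μ x (n, k) := by
  unfold JmuZ JmuZTerm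
  split_ifs
  · exact Jmu_eq_tsum μ x _
  · rw [Jmu_eq_tsum, ← tsum_mul_left]

noncomputable def antidiagonalTerm (p : ℕ × ℕ) : ℝ :=
  (-1) ^ p.1 * (p.1 + p.2).choose p.1 * dPowDivFact μ x (p.1 + p.2)

lemma JmuZTerm_subMinEquiv (p : ℕ × ℕ) :
    JmuZTerm μ x (subMinEquiv p) = antidiagonalTerm μ x p := by
  obtain ⟨j, l⟩ := p
  rcases le_or_gt j l with h | h
  · obtain ⟨d, rfl⟩ := Nat.exists_eq_add_of_le h
    simp [subMinEquiv, JmuZTerm, JmuTerm, antidiagonalTerm, two_mul, add_assoc]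
  · obtain ⟨d, rfl⟩ := Nat.exists_eq_add_of_lt h
    have hn : (l : ℤ) - (l + d + 1 : ℕ) = -(d + 1 : ℕ) := by push_cast; ring
    simp only [subMinEquiv, Equiv.coe_fn_mk, JmuZTerm, hn, neg_nonneg, Nat.cast_nonpos,
      neg_neg, Int.toNat_natCast, min_eq_right h.le]
    rw [if_neg (by omega), JmuTerm, antidiagonalTerm,
      show 2 * l + (d + 1) = l + d + 1 + l by ring, ← choose_symm_add]
    ring

lemma summable_antidiagonalTerm (hμ : 0 ≤ μ) : Summable (antidiagonalTerm μ x) := by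
  refine .of_norm_bounded ((Real.summable_pow_div_factorial |x / 2|).mul_of_nonneg
    (Real.summable_pow_div_factorial |x / 2|) (fun _ => by positivity) fun _ => by positivity)
    fun p => ?_
  calc ‖antidiagonalTerm μ x p‖
      = (p.1 + p.2).choose p.1 * |dPowDivFact μ x (p.1 + p.2)| := by
        simp [antidiagonalTerm]
    _ ≤ (p.1 + p.2).choose p.1 * (|x / 2| ^ (p.1 + p.2) / (p.1 + p.2) !) := by
        gcongr; exact abs_dPowDivFact_le μ x hμ _
    _ = |x / 2| ^ p.1 / p.1 ! * (|x / 2| ^ p.2 / p.2 !) := by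
        rw [cast_add_choose]; field_simp; ring

lemma sum_antidiagonal_antidiagonalTerm (N : ℕ) :
    ∑ p ∈ antidiagonal N, antidiagonalTerm μ x p = if N = 0 then 1 else 0 := by
  calc ∑ p ∈ antidiagonal N, antidiagonalTerm μ x p
      = (∑ p ∈ antidiagonal N, (-1 : ℝ) ^ p.1 * N.choose p.1) * dPowDivFact μ x N := by
        rw [sum_mul]
        refine sum_congr rfl fun p hp => ?_
        rw [antidiagonalTerm, mem_antidiagonal.1 hp]
    _ = if N = 0 then 1 else 0 := by
        rw [sum_antidiagonal_neg_one_pow_mul_choose]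
        split_ifs with hN
        · simp [hN, dPowDivFact, dFact]
        · rw [zero_mul]

lemma hasSum_antidiagonalTerm (hμ : 0 ≤ μ) : HasSum (antidiagonalTerm μ x) 1 := by
  have h := (summable_antidiagonalTerm μ x hμ).hasSum
  have hdiag := h.sum_antidiagonal
  simp_rw [sum_antidiagonal_antidiagonalTerm] at hdiag
  rwa [← (hasSum_ite_eq 0 1).unique hdiag] at h

lemma hasSum_JmuZTerm (hμ : 0 ≤ μ) : HasSum (JmuZTerm μ x) 1 :=
  subMinEquiv.hasSum_iff.1 <| by
    rw [show JmuZTerm μ x ∘ subMinEquiv = _ from funext (JmuZTerm_subMinEquiv μ x)]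
    exact hasSum_antidiagonalTerm μ x hμ

lemma hasSum_JmuZ (hμ : 0 ≤ μ) : HasSum (fun n : ℤ => JmuZ μ n x) 1 := by
  have h := hasSum_JmuZTerm μ x hμ
  refine h.prod_fiberwise fun n => ?_
  rw [JmuZ_eq_tsum]
  exact (h.summable.prod_factor n).hasSum

lemma JmuZ_natCast_add_JmuZ_neg (n : ℕ) :
    JmuZ μ n x + JmuZ μ (-n) x = (1 + (-1) ^ n) * Jmu μ n x := by
  rcases n with _ | n
  · rw [Nat.cast_zero, neg_zero, pow_zero, JmuZ, if_pos le_rfl, Int.toNat_zero]; ring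
  · have : ¬ (0 : ℤ) ≤ -(n + 1 : ℕ) := by omega
    rw [JmuZ, JmuZ, if_pos (by omega), if_neg this, neg_neg, Int.toNat_natCast]
    ring

lemma hasSum_two_mul_Jmu_two_mul (hμ : 0 ≤ μ) :
    HasSum (fun n : ℕ => 2 * Jmu μ (2 * n) x) (1 + Jmu μ 0 x) := by
  have h := (hasSum_JmuZ μ x hμ).nat_add_neg
  simp only [JmuZ_natCast_add_JmuZ_neg] at h
  have hodd : ∀ n ∉ Set.range (2 * ·), (1 + (-1) ^ n) * Jmu μ n x = 0 := by
    intro n hn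
    rcases n.even_or_odd with ⟨k, rfl⟩ | hn'
    · exact absurd ⟨k, two_mul k⟩ hn
    · simp [hn'.neg_one_pow]
  convert ((mul_right_injective₀ (two_ne_zero' ℕ)).hasSum_iff hodd).2 h using 1
  · ext n
    simp only [Function.comp_apply, pow_mul, neg_one_sq, one_pow]
    ring
  · simp [JmuZ]

end

/-- `Σ_{n ∈ ℤ} J_n^μ(x) = 1`, equivalently `J_0^μ(x) + 2 Σ_{n≥1} J_{2n}^μ(x) = 1`. -/
theorem Jmu_sum_one (μ : ℝ) (hμ : 0 ≤ μ) (x : ℝ) :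
    (∑' n : ℤ, JmuZ μ n x) = 1 ∧
      Jmu μ 0 x + 2 * ∑' n : ℕ, Jmu μ (2 * (n + 1)) x = 1 := by
  refine ⟨(hasSum_JmuZ μ x hμ).tsum_eq, ?_⟩
  have h := ((hasSum_nat_add_iff' 1).2 (hasSum_two_mul_Jmu_two_mul μ x hμ)).tsum_eq
  rw [tsum_mul_left] at h
  simp only [range_one, sum_singleton, mul_zero] at h
  linarith
end
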